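/- Let δ > 0, β₀ > 0, β₁ < −δ/(β₀(1 − 2h(x₀))), let x_c ∈ (0, π) be the unique positive solution of sin(x)/x = (δ + β₀β₁)/(2β₀β₁), and set τ_c = x_c²/(2β₀β₁(cos(x_c) − 1)) and ω_c = x_c/τ_c. Then τ_c > 0, ω_c > 0, the pair (ω_c, τ_c) is the unique pair of positive reals (ω, τ) satisfying sin(ωτ)/(ωτ) = (δ + β₀β₁)/(2β₀β₁) and (cos(ωτ) − 1)/(ωτ)² = 1/(2β₀β₁τ), and Δ(iω_c, τ_c) = 0 = Δ(−iω_c, τ_c). -/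

import Mathlib

/-- The characteristic function
`Δ(λ,τ) = λ + δ + β₀β₁ − (2β₀β₁/τ)∫_{−τ}^{0} e^{λ s} ds`, for `λ ∈ ℂ`. -/
noncomputable def charFn (δ β₀ β₁ τ : ℝ) (lam : ℂ) : ℂ :=
  lam + (δ : ℂ) + (β₀ : ℂ) * (β₁ : ℂ) -
    ((2 * β₀ * β₁ / τ : ℝ) : ℂ) * ∫ s in (-τ)..(0 : ℝ), Complex.exp (lam * (s : ℂ))

/-- `h(x) = sin(x)/x`. -/
noncomputable def hfun (x : ℝ) : ℝ := Real.sin x / x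

/-- `x₀`, the smallest `x > 0` with `x = tan x` and `h(x) > 0` (numerically `x₀ ≈ 7.725`). -/
noncomputable def xZero : ℝ := sInf {x : ℝ | 0 < x ∧ x = Real.tan x ∧ 0 < hfun x}

/-- The system (11)/(12): `sin(ωτ)/(ωτ) = (δ+β₀β₁)/(2β₀β₁)` and
`(cos(ωτ) − 1)/(ωτ)² = 1/(2β₀β₁τ)`. -/
def sys (δ β₀ β₁ ω τ : ℝ) : Prop :=
  Real.sin (ω * τ) / (ω * τ) = (δ + β₀ * β₁) / (2 * β₀ * β₁) ∧
  (Real.cos (ω * τ) - 1) / (ω * τ) ^ 2 = 1 / (2 * β₀ * β₁ * τ)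

open Real Set

/-!
With `φ(x) = x cos x - sin x`, `φ' = -x sin x`, so `φ` decreases on `[0, π]` and on `[2π, 3π]`:
this places `x₀` in `(2π, 5π/2)` with `sin x₀ = x₀ cos x₀`, hence `h(x₀) = cos x₀ < 1/2`.
As `sin` is concave on `[2π, 3π]` and its tangent at `x₀` passes through the origin,
`h ≤ h(x₀)` on `[π, ∞)`. The bound on `β₁` says `β₁ < 0` and
`r = (δ + β₀β₁)/(2β₀β₁) > h(x₀)`, so `h(ωτ) = r` forces `ωτ < π`, where `h` is injective:
`ωτ = x_c`, and the second equation then pins down `τ`. Multiplied by `ω`, the two equations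
are the real and imaginary parts of `Δ(iω, τ) = 0`.
-/

lemma strictAntiOn_mul_cos_sub_sin (k : ℕ) :
    StrictAntiOn (fun x : ℝ => x * cos x - sin x) (Icc (k * (2 * π)) (k * (2 * π) + π)) := by
  refine strictAntiOn_of_deriv_neg (convex_Icc _ _) (by fun_prop) fun x hx => ?_
  rw [interior_Icc] at hx
  have hx0 : 0 < x := lt_of_le_of_lt (by positivity) hx.1
  have hsin : 0 < sin x := by
    rw [← sin_sub_nat_mul_two_pi x k]
    exact sin_pos_of_pos_of_lt_pi (by linarith [hx.1]) (by linarith [hx.2])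
  have hderiv : HasDerivAt (fun x : ℝ => x * cos x - sin x) (-(x * sin x)) x := by
    simpa using ((hasDerivAt_id x).fun_mul (hasDerivAt_cos x)).fun_sub (hasDerivAt_sin x)
  rw [hderiv.deriv]
  nlinarith

lemma mul_cos_sub_sin_neg {x : ℝ} (hx0 : 0 < x) (hxπ : x ≤ π) : x * cos x - sin x < 0 := by
  simpa using
    strictAntiOn_mul_cos_sub_sin 0 (a := 0) (by simp [pi_pos.le]) (by simp [hx0.le, hxπ]) hx0

lemma exists_sin_eq_mul_cos : ∃ c ∈ Ioo (2 * π) (5 * π / 2), sin c = c * cos c := by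
  have hsin : sin (5 * π / 2) = 1 := by
    rw [show 5 * π / 2 = π / 2 + 2 * π by ring, sin_add_two_pi, sin_pi_div_two]
  have hcos : cos (5 * π / 2) = 0 := by
    rw [show 5 * π / 2 = π / 2 + 2 * π by ring, cos_add_two_pi, cos_pi_div_two]
  have hsign : (0 : ℝ) ∈ Ioo (5 * π / 2 * cos (5 * π / 2) - sin (5 * π / 2))
      (2 * π * cos (2 * π) - sin (2 * π)) := by
    rw [hsin, hcos, cos_two_pi, sin_two_pi]
    constructor <;> linarith [pi_pos]
  obtain ⟨c, hc, hc0⟩ := intermediate_value_Ioo' (by linarith [pi_pos])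
    (by fun_prop : ContinuousOn (fun x : ℝ => x * cos x - sin x) (Icc (2 * π) (5 * π / 2))) hsign
  exact ⟨c, hc, by linarith [hc0]⟩

lemma isLeast_of_sin_eq_mul_cos {c : ℝ} (hc : c ∈ Ioo (2 * π) (5 * π / 2))
    (hceq : sin c = c * cos c) :
    IsLeast {x : ℝ | 0 < x ∧ x = tan x ∧ 0 < hfun x} c := by
  have hc0 : 0 < c := by linarith [hc.1, pi_pos]
  have hcos : 0 < cos c := by
    rw [← cos_sub_two_pi]
    exact cos_pos_of_mem_Ioo ⟨by linarith [hc.1, pi_pos], by linarith [hc.2]⟩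
  refine ⟨⟨hc0, by rw [tan_eq_sin_div_cos, hceq, mul_div_cancel_right₀ _ hcos.ne'], ?_⟩, ?_⟩
  · rw [hfun, hceq, mul_div_cancel_left₀ _ hc0.ne']
    exact hcos
  rintro y ⟨hy0, hytan, hyh⟩
  by_contra! hyc
  have hsin : 0 < sin y := by
    rw [hfun] at hyh
    exact (div_pos_iff_of_pos_right hy0).mp hyh
  have hcos_y : cos y ≠ 0 := by
    intro h
    rw [tan_eq_sin_div_cos, h, div_zero] at hytan
    exact hy0.ne' hytan
  have hyeq : y * cos y - sin y = 0 := by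
    rw [tan_eq_sin_div_cos, eq_div_iff hcos_y] at hytan
    linarith
  rcases le_or_gt y π with h1 | h1
  · linarith [mul_cos_sub_sin_neg hy0 h1]
  rcases le_or_gt y (2 * π) with h2 | h2
  · have := sin_nonpos_of_nonpos_of_neg_pi_le (x := y - 2 * π) (by linarith) (by linarith)
    rw [sin_sub_two_pi] at this
    linarith
  · have hmem : ∀ z ∈ Icc (2 * π) c, z ∈ Icc ((1 : ℕ) * (2 * π)) ((1 : ℕ) * (2 * π) + π) :=
      fun z hz => by norm_num; constructor <;> linarith [hz.1, hz.2, hc.2, pi_pos]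
    have := strictAntiOn_mul_cos_sub_sin 1 (hmem y ⟨h2.le, hyc.le⟩) (hmem c ⟨hc.1.le, le_rfl⟩) hyc
    simp only at this
    linarith

lemma xZero_spec : xZero ∈ Ioo (2 * π) (5 * π / 2) ∧ sin xZero = xZero * cos xZero := by
  obtain ⟨c, hc, hceq⟩ := exists_sin_eq_mul_cos
  rw [xZero, (isLeast_of_sin_eq_mul_cos hc hceq).csInf_eq]
  exact ⟨hc, hceq⟩

lemma hfun_xZero : hfun xZero = cos xZero := by
  have hx₀ : xZero ≠ 0 := by linarith [xZero_spec.1.1, pi_pos]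
  rw [hfun, xZero_spec.2, mul_div_cancel_left₀ _ hx₀]

lemma cos_sq_mul_one_add_sq {c : ℝ} (hc : sin c = c * cos c) : cos c ^ 2 * (1 + c ^ 2) = 1 := by
  linear_combination (sin_sq_add_cos_sq c) - (sin c + c * cos c) * hc

lemma hfun_xZero_lt_half : hfun xZero < 1 / 2 := by
  obtain ⟨⟨hlow, -⟩, hx₀⟩ := xZero_spec
  have hsq := cos_sq_mul_one_add_sq hx₀
  have hbig : 4 < 1 + xZero ^ 2 := by nlinarith [pi_gt_three]
  rw [hfun_xZero]
  by_contra! hcos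
  nlinarith [pow_le_pow_left₀ (by norm_num) hcos 2]

lemma inv_three_pi_lt_hfun_xZero : (3 * π)⁻¹ < hfun xZero := by
  obtain ⟨⟨hlow, hup⟩, hx₀⟩ := xZero_spec
  have hsq := cos_sq_mul_one_add_sq hx₀
  have hcos : 0 < cos xZero := by
    rw [← cos_sub_two_pi]
    exact cos_pos_of_mem_Ioo ⟨by linarith [pi_pos], by linarith⟩
  have hbound : 1 + xZero ^ 2 < (3 * π) ^ 2 := by nlinarith [pi_gt_three]
  have hsq' : 1 < (cos xZero * (3 * π)) ^ 2 := by
    rw [mul_pow, ← hsq]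
    exact mul_lt_mul_of_pos_left hbound (by positivity)
  rw [hfun_xZero, inv_lt_iff_one_lt_mul₀ (by positivity)]
  nlinarith [mul_pos hcos (by positivity : (0 : ℝ) < 3 * π)]

lemma concaveOn_sin_Icc_two_pi : ConcaveOn ℝ (Icc (2 * π) (3 * π)) sin := by
  refine (strictConcaveOn_of_deriv2_neg (convex_Icc _ _) continuousOn_sin fun x hx => ?_).concaveOn
  rw [interior_Icc] at hx
  have : 0 < sin x := by
    rw [← sin_sub_two_pi]
    exact sin_pos_of_pos_of_lt_pi (by linarith [hx.1]) (by linarith [hx.2])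
  simpa using this

lemma sin_le_sin_add_cos_mul_sub {c x : ℝ} (hc : c ∈ Icc (2 * π) (3 * π))
    (hx : x ∈ Icc (2 * π) (3 * π)) : sin x ≤ sin c + cos c * (x - c) := by
  rcases lt_trichotomy x c with hxc | rfl | hcx
  · have := concaveOn_sin_Icc_two_pi.le_slope_of_hasDerivAt hx hc hxc (hasDerivAt_sin c)
    rw [slope_def_field, le_div_iff₀ (by linarith)] at this
    linarith
  · simp
  · have := concaveOn_sin_Icc_two_pi.slope_le_of_hasDerivAt hc hx hcx (hasDerivAt_sin c)
    rw [slope_def_field, div_le_iff₀ (by linarith)] at this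
    linarith

lemma hfun_le_hfun_xZero {x : ℝ} (hx : π ≤ x) : hfun x ≤ hfun xZero := by
  have hx0 : 0 < x := pi_pos.trans_le hx
  have hpos : 0 < hfun xZero := lt_trans (by positivity) inv_three_pi_lt_hfun_xZero
  rcases le_or_gt x (2 * π) with h2 | h2
  · have hsin : sin x ≤ 0 := by
      rw [← sin_sub_two_pi]
      exact sin_nonpos_of_nonpos_of_neg_pi_le (by linarith) (by linarith)
    exact (div_nonpos_of_nonpos_of_nonneg hsin hx0.le).trans hpos.le
  rcases le_or_gt x (3 * π) with h3 | h3
  · obtain ⟨⟨hlow, hup⟩, hx₀⟩ := xZero_spec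
    have := sin_le_sin_add_cos_mul_sub (c := xZero) ⟨hlow.le, by linarith [pi_pos]⟩ ⟨h2.le, h3⟩
    rw [hfun, hfun_xZero, div_le_iff₀ hx0]
    linarith
  · calc hfun x ≤ |x|⁻¹ := sin_div_le_inv_abs x
      _ = x⁻¹ := by rw [abs_of_pos hx0]
      _ ≤ (3 * π)⁻¹ := inv_anti₀ (by positivity) h3.le
      _ ≤ hfun xZero := inv_three_pi_lt_hfun_xZero.le

lemma strictAntiOn_hfun : StrictAntiOn hfun (Ioo 0 π) := by
  refine strictAntiOn_of_deriv_neg (convex_Ioo _ _) (fun x hx => ?_) fun x hx => ?_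
  · exact (continuous_sin.continuousAt.div continuousAt_id hx.1.ne').continuousWithinAt
  rw [interior_Ioo] at hx
  have hderiv : HasDerivAt hfun ((cos x * x - sin x * 1) / x ^ 2) x :=
    (hasDerivAt_sin x).div (hasDerivAt_id x) hx.1.ne'
  rw [hderiv.deriv, mul_one]
  exact div_neg_of_neg_of_pos (by linarith [mul_cos_sub_sin_neg hx.1 hx.2.le]) (pow_pos hx.1 2)

lemma eq_of_hfun_eq {x y : ℝ} (hx : 0 < x) (hy : y ∈ Ioo 0 π) (hy₀ : hfun xZero < hfun y)
    (h : hfun x = hfun y) : x = y := by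
  have hxπ : x < π := by
    by_contra! hle
    exact (hfun_le_hfun_xZero hle).not_gt (h ▸ hy₀)
  exact strictAntiOn_hfun.injOn ⟨hx, hxπ⟩ hy h

lemma sys_iff {δ β₀ β₁ x_c ω τ : ℝ} (hβ : β₀ * β₁ ≠ 0) (hx_c : x_c ∈ Ioo 0 π)
    (hx_c_sol : hfun x_c = (δ + β₀ * β₁) / (2 * β₀ * β₁)) (hx_c₀ : hfun xZero < hfun x_c)
    (hωτ : 0 < ω * τ) :
    sys δ β₀ β₁ ω τ ↔ ω * τ = x_c ∧ τ = x_c ^ 2 / (2 * β₀ * β₁ * (cos x_c - 1)) := by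
  have hk : 2 * β₀ * β₁ ≠ 0 := by rw [mul_assoc]; exact mul_ne_zero two_ne_zero hβ
  have hcos : cos x_c - 1 ≠ 0 :=
    (sub_neg.2 (by simpa using cos_lt_cos_of_nonneg_of_le_pi le_rfl hx_c.2.le hx_c.1)).ne
  have hτ : (cos x_c - 1) / x_c ^ 2 = 1 / (2 * β₀ * β₁ * τ) ↔
      τ = x_c ^ 2 / (2 * β₀ * β₁ * (cos x_c - 1)) := by
    rw [one_div, eq_comm, inv_eq_iff_eq_inv, inv_div, eq_div_iff hcos,
      eq_div_iff (mul_ne_zero hk hcos)]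
    constructor <;> intro h <;> linear_combination h
  rw [sys, ← hx_c_sol]
  constructor
  · rintro ⟨h₁, h₂⟩
    have hx : ω * τ = x_c := eq_of_hfun_eq hωτ hx_c hx_c₀ h₁
    exact ⟨hx, hτ.1 (hx ▸ h₂)⟩
  · rintro ⟨hx, h₂⟩
    exact ⟨hx ▸ rfl, hx ▸ hτ.2 h₂⟩

lemma sys.neg {δ β₀ β₁ ω τ : ℝ} (h : sys δ β₀ β₁ ω τ) : sys δ β₀ β₁ (-ω) τ := by
  simpa only [sys, neg_mul, sin_neg, cos_neg, neg_div_neg_eq, neg_sq] using h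

lemma charFn_I_mul_eq_zero {δ β₀ β₁ ω τ : ℝ} (hωτ : ω * τ ≠ 0) (hβ : β₀ * β₁ ≠ 0)
    (h : sys δ β₀ β₁ ω τ) : charFn δ β₀ β₁ τ (Complex.I * ω) = 0 := by
  have hω : (ω : ℂ) ≠ 0 := Complex.ofReal_ne_zero.2 (left_ne_zero_of_mul hωτ)
  have hτ : (τ : ℂ) ≠ 0 := Complex.ofReal_ne_zero.2 (right_ne_zero_of_mul hωτ)
  have hk : 2 * β₀ * β₁ ≠ 0 := by rw [mul_assoc]; exact mul_ne_zero two_ne_zero hβ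
  obtain ⟨h₁, h₂⟩ := h
  rw [div_eq_div_iff hωτ hk] at h₁
  rw [div_eq_div_iff (pow_ne_zero 2 hωτ) (mul_ne_zero hk (right_ne_zero_of_mul hωτ))] at h₂
  have h₂τ : (cos (ω * τ) - 1) * (2 * β₀ * β₁) = ω ^ 2 * τ :=
    mul_right_cancel₀ (right_ne_zero_of_mul hωτ) (by linear_combination h₂)
  have h₁' := congrArg (fun r : ℝ => (r : ℂ)) h₁
  have h₂' := congrArg (fun r : ℝ => (r : ℂ)) h₂τ
  push_cast at h₁' h₂'
  have hexp : Complex.exp (Complex.I * ω * ((-τ : ℝ) : ℂ)) =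
      Real.cos (ω * τ) - Real.sin (ω * τ) * Complex.I := by
    rw [show Complex.I * ω * ((-τ : ℝ) : ℂ) = ((-(ω * τ) : ℝ) : ℂ) * Complex.I by push_cast; ring,
      Complex.exp_mul_I, ← Complex.ofReal_cos, ← Complex.ofReal_sin, cos_neg, sin_neg]
    push_cast; ring
  rw [charFn, integral_exp_mul_complex (mul_ne_zero Complex.I_ne_zero hω), hexp]
  simp only [Complex.ofReal_zero, mul_zero, Complex.exp_zero]
  push_cast
  field_simp
  linear_combination (-Complex.I) * h₁' + h₂' + (ω ^ 2 * τ : ℂ) * Complex.I_sq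

lemma neg_and_lt_div_of_lt_neg_div {δ β₀ β₁ a : ℝ} (hδ : 0 < δ) (hβ₀ : 0 < β₀) (ha : a < 1 / 2)
    (hβ₁ : β₁ < -δ / (β₀ * (1 - 2 * a))) :
    β₁ < 0 ∧ a < (δ + β₀ * β₁) / (2 * β₀ * β₁) := by
  have hden : 0 < β₀ * (1 - 2 * a) := mul_pos hβ₀ (by linarith)
  have hβ₁neg : β₁ < 0 := hβ₁.trans (div_neg_of_neg_of_pos (neg_neg_of_pos hδ) hden)
  rw [lt_div_iff₀ hden] at hβ₁
  exact ⟨hβ₁neg, by rw [lt_div_iff_of_neg (by nlinarith)]; linarith⟩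

/-- with `x_c ∈ (0,π)` the solution of `h(x) = (δ+β₀β₁)/(2β₀β₁)`,
`τ_c = x_c²/(2β₀β₁(cos x_c − 1))` and `ω_c = x_c/τ_c`, one has `τ_c > 0`, `ω_c > 0`,
`(ω_c, τ_c)` is the unique pair of positive reals solving the system, and
`Δ(± i ω_c, τ_c) = 0`. -/
theorem critical_pair_unique
    (δ β₀ β₁ x_c τ_c ω_c : ℝ) (hδ : 0 < δ) (hβ₀ : 0 < β₀)
    (hβ₁ : β₁ < -δ / (β₀ * (1 - 2 * hfun xZero)))
    (hx_c : x_c ∈ Set.Ioo 0 Real.pi)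
    (hx_c_sol : hfun x_c = (δ + β₀ * β₁) / (2 * β₀ * β₁))
    (hτ_c : τ_c = x_c ^ 2 / (2 * β₀ * β₁ * (Real.cos x_c - 1)))
    (hω_c : ω_c = x_c / τ_c) :
    0 < τ_c ∧ 0 < ω_c ∧
    sys δ β₀ β₁ ω_c τ_c ∧
    (∀ ω τ : ℝ, 0 < ω → 0 < τ → sys δ β₀ β₁ ω τ → ω = ω_c ∧ τ = τ_c) ∧
    charFn δ β₀ β₁ τ_c (Complex.I * (ω_c : ℂ)) = 0 ∧
    charFn δ β₀ β₁ τ_c (-(Complex.I * (ω_c : ℂ))) = 0 := by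
  obtain ⟨hβ₁neg, hx_c₀⟩ := neg_and_lt_div_of_lt_neg_div hδ hβ₀ hfun_xZero_lt_half hβ₁
  rw [← hx_c_sol] at hx_c₀
  have hβ : β₀ * β₁ < 0 := mul_neg_of_pos_of_neg hβ₀ hβ₁neg
  have hcos : cos x_c < 1 := by simpa using cos_lt_cos_of_nonneg_of_le_pi le_rfl hx_c.2.le hx_c.1
  have hτ_pos : 0 < τ_c :=
    hτ_c ▸ div_pos (pow_pos hx_c.1 2) (mul_pos_of_neg_of_neg (by linarith) (by linarith))
  have hω_pos : 0 < ω_c := hω_c ▸ div_pos hx_c.1 hτ_pos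
  have hx_c_eq : ω_c * τ_c = x_c := by rw [hω_c, div_mul_cancel₀ _ hτ_pos.ne']
  have hsys := fun ω τ (hωτ : 0 < ω * τ) => sys_iff hβ.ne hx_c hx_c_sol hx_c₀ hωτ
  have hcrit : sys δ β₀ β₁ ω_c τ_c := (hsys _ _ (mul_pos hω_pos hτ_pos)).2 ⟨hx_c_eq, hτ_c⟩
  have hωτ : ω_c * τ_c ≠ 0 := (mul_pos hω_pos hτ_pos).ne'
  refine ⟨hτ_pos, hω_pos, hcrit, fun ω τ hω hτ h => ?_, charFn_I_mul_eq_zero hωτ hβ.ne hcrit, ?_⟩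
  · obtain ⟨hx, hτ_eq⟩ := (hsys ω τ (mul_pos hω hτ)).1 h
    rw [← hτ_c] at hτ_eq
    subst hτ_eq
    exact ⟨mul_right_cancel₀ hτ_pos.ne' (hx.trans hx_c_eq.symm), rfl⟩
  · rw [show -(Complex.I * ω_c) = Complex.I * ((-ω_c : ℝ) : ℂ) by push_cast; ring]
    exact charFn_I_mul_eq_zero (by rwa [neg_mul, neg_ne_zero]) hβ.ne hcrit.neg
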